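/- Fix α ∈ (1/2,1). Define, for integers n and 1 ≤ i ≤ (1−α)n − 1, φ_e(i) = (n−1)·( n²/((αn−i)((1−α)n−i)(n+2i)) − 1/(n+2i) ). There exists a constant C > 0 such that for every n for which αn is an integer, | Σ_{i=1}^{(1−α)n−1} φ_e(i) − n·log(n)/((2α−1)(3−2α)) | ≤ C·n. Equivalently, the exact identity holds: Σ_{i=1}^{(1−α)n−1} φ_e(i) = ((n−1)/((2α−1)(3−2α)))·H_{(1−α)n−1} − ((n−1)/((2α−1)(1+2α)))·(H_{αn−1} − H_{(2α−1)n}) + ( 2/((2α−1)(3−2α)) − 2/((2α−1)(1+2α)) − 1 )·Σ_{i=1}^{(1−α)n−1} (n−1)/(n+2i), which is n·log(n)/((2α−1)(3−2α)) + O(n). -/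

import Mathlib

/-!
Partial fractions split `n² / ((αn - i)((1-α)n - i)(n + 2i))` into multiples of `1/((1-α)n - i)`,
`1/(αn - i)` and `1/(n + 2i)`, with coefficients read off at the three poles. Summed over `i`,
the first two become differences of harmonic numbers: `H_{(1-α)n-1} = log n + O(1)` gives the
main term, while `H_{αn-1} - H_{(2α-1)n}` has fewer than `(1-α)n` terms, each at most
`1/((2α-1)n)`, and so stays bounded. The last sum has fewer than `n` terms, each at most `1`.
-/

open Finset Real

/-- The `k`-th harmonic number `H_k = ∑_{i=1}^k 1/i`. -/
noncomputable def harmR (k : ℕ) : ℝ := ∑ i ∈ Finset.range k, 1 / ((i : ℝ) + 1)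

/-- The expected sojourn time in mode `i` of phase 1 on the star network of `n` nodes:
`φ_e(i) = (n-1)( n²/((αn-i)((1-α)n-i)(n+2i)) - 1/(n+2i) )`. -/
noncomputable def phiE (α : ℝ) (n i : ℕ) : ℝ :=
  ((n : ℝ) - 1) * ((n : ℝ) ^ 2
      / ((α * n - i) * ((1 - α) * n - i) * ((n : ℝ) + 2 * i))
    - 1 / ((n : ℝ) + 2 * i))

lemma harmR_eq_harmonic (k : ℕ) : harmR k = harmonic k := by
  simp [harmR, harmonic, one_div]

lemma harmR_succ (k : ℕ) : harmR (k + 1) = harmR k + 1 / ((k : ℝ) + 1) :=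
  sum_range_succ _ k

lemma harmR_sub_harmR_eq_sum_Ico {m k : ℕ} (h : m ≤ k) :
    harmR k - harmR m = ∑ i ∈ Ico m k, 1 / ((i : ℝ) + 1) :=
  (sum_Ico_eq_sub _ h).symm

lemma harmR_sub_harmR_nonneg {m k : ℕ} (h : m ≤ k) : 0 ≤ harmR k - harmR m := by
  rw [harmR_sub_harmR_eq_sum_Ico h]
  exact sum_nonneg fun i _ => by positivity

lemma harmR_sub_harmR_le {m k : ℕ} (h : m ≤ k) :
    harmR k - harmR m ≤ ((k : ℝ) - m) / ((m : ℝ) + 1) := by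
  rw [harmR_sub_harmR_eq_sum_Ico h]
  calc ∑ i ∈ Ico m k, 1 / ((i : ℝ) + 1) ≤ ∑ _i ∈ Ico m k, 1 / ((m : ℝ) + 1) := by
        refine sum_le_sum fun i hi => ?_
        gcongr
        exact_mod_cast (mem_Ico.1 hi).1
    _ = ((k : ℝ) - m) / ((m : ℝ) + 1) := by
        rw [sum_const, Nat.card_Ico, nsmul_eq_mul, Nat.cast_sub h, mul_one_div]

lemma abs_harmR_sub_log_le {k n : ℕ} (hk : k + 1 ≤ n) :
    |harmR k - log n| ≤ 1 + log (n / (k + 1)) := by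
  have hk0 : (0 : ℝ) < k + 1 := by positivity
  have hkn : (k : ℝ) + 1 ≤ n := by exact_mod_cast hk
  have hlog_split : log n = log (k + 1) + log (n / (k + 1)) := by
    rw [← log_mul hk0.ne' (div_pos (by linarith) hk0).ne', mul_div_cancel₀ _ hk0.ne']
  have hratio : 0 ≤ log (n / (k + 1)) := log_nonneg ((one_le_div hk0).2 hkn)
  have hlower : log (k + 1) ≤ harmR k := by
    rw [harmR_eq_harmonic]; exact_mod_cast log_add_one_le_harmonic k
  have hupper : harmR k ≤ 1 + log n := by
    have hmono := harmR_sub_harmR_nonneg (show k ≤ n by omega)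
    have hlog : harmR n ≤ 1 + log n := by
      rw [harmR_eq_harmonic]; exact_mod_cast harmonic_le_one_add_log n
    linarith
  rw [abs_le]; constructor <;> linarith

lemma abs_mul_harmR_sub_mul_log_le {k n : ℕ} (hk : k + 1 ≤ n) :
    |((n : ℝ) - 1) * harmR k - n * log n| ≤ (2 + log (n / (k + 1))) * n := by
  have hn : (1 : ℝ) ≤ n := by exact_mod_cast (show 1 ≤ n by omega)
  have hH := abs_harmR_sub_log_le hk
  have hlog0 : 0 ≤ log (n : ℝ) := log_nonneg hn
  have hlogn : log (n : ℝ) ≤ n := log_le_self (by positivity)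
  calc |((n : ℝ) - 1) * harmR k - n * log n|
      = |((n : ℝ) - 1) * (harmR k - log n) - log n| := by ring_nf
    _ ≤ ((n : ℝ) - 1) * |harmR k - log n| + log n := by
        refine (abs_sub _ _).trans ?_
        rw [abs_mul, abs_of_nonneg (by linarith : (0 : ℝ) ≤ n - 1), abs_of_nonneg hlog0]
    _ ≤ (2 + log (n / (k + 1))) * n := by
        nlinarith [abs_nonneg (harmR k - log n)]

lemma sum_Icc_one_div_sub_eq {c b : ℕ} (hb : b < c) :
    ∑ i ∈ Icc 1 b, 1 / ((c : ℝ) - i) = harmR (c - 1) - harmR (c - 1 - b) := by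
  induction b with
  | zero => simp
  | succ b ih =>
    have hcast : ((c - 1 - (b + 1) : ℕ) : ℝ) + 1 = c - (b + 1 : ℕ) := by
      rw [Nat.sub_sub, Nat.cast_sub (by omega)]; push_cast; ring
    rw [sum_Icc_succ_top (by omega), ih (by omega),
      show c - 1 - b = c - 1 - (b + 1) + 1 by omega, harmR_succ, hcast]
    ring

lemma sum_div_add_two_mul_le (n m : ℕ) :
    ∑ i ∈ Icc 1 m, ((n : ℝ) - 1) / (n + 2 * i) ≤ m := by
  calc ∑ i ∈ Icc 1 m, ((n : ℝ) - 1) / (n + 2 * i) ≤ ∑ _i ∈ Icc 1 m, (1 : ℝ) := by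
        refine sum_le_sum fun i hi => ?_
        have : (1 : ℝ) ≤ i := by exact_mod_cast (mem_Icc.1 hi).1
        rw [div_le_one (by positivity)]
        linarith
    _ = m := by simp

lemma sub_one_mul_partial_fractions (x N I : ℝ) (hA : x * N - I ≠ 0) (hB : (1 - x) * N - I ≠ 0)
    (hD : N + 2 * I ≠ 0) (h₁ : 2 * x - 1 ≠ 0) (h₂ : 3 - 2 * x ≠ 0) (h₃ : 1 + 2 * x ≠ 0) :
    (N - 1) * (N ^ 2 / ((x * N - I) * ((1 - x) * N - I) * (N + 2 * I)) - 1 / (N + 2 * I))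
      = (N - 1) / ((2 * x - 1) * (3 - 2 * x)) * (1 / ((1 - x) * N - I))
        - (N - 1) / ((2 * x - 1) * (1 + 2 * x)) * (1 / (x * N - I))
        + (2 / ((2 * x - 1) * (3 - 2 * x)) - 2 / ((2 * x - 1) * (1 + 2 * x)) - 1)
          * ((N - 1) / (N + 2 * I)) := by
  -- keep the three linear factors atomic, so that `field_simp` clears exactly these denominators
  generalize eA : x * N - I = A at hA ⊢
  generalize eB : (1 - x) * N - I = B at hB ⊢
  generalize eD : N + 2 * I = D at hD ⊢
  field_simp
  subst eA eB eD
  ring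

section StarNetwork

variable {α : ℝ} {n a : ℕ}

lemma lt_and_lt_two_mul_of_cast_eq_mul (hα : 1 / 2 < α) (hα1 : α < 1) (hn : 0 < n)
    (ha : (a : ℝ) = α * n) : a < n ∧ n < 2 * a := by
  have hn' : (0 : ℝ) < n := by exact_mod_cast hn
  constructor
  · exact_mod_cast (show (a : ℝ) < n by rw [ha]; nlinarith)
  · exact_mod_cast (show (n : ℝ) < 2 * a by rw [ha]; nlinarith)

theorem sum_phiE_eq (hα : 1 / 2 < α) (hα1 : α < 1) (hn : 0 < n) (ha : (a : ℝ) = α * n) :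
    ∑ i ∈ Icc 1 (n - a - 1), phiE α n i
      = (((n : ℝ) - 1) / ((2 * α - 1) * (3 - 2 * α))) * harmR (n - a - 1)
        - (((n : ℝ) - 1) / ((2 * α - 1) * (1 + 2 * α))) * (harmR (a - 1) - harmR (2 * a - n))
        + (2 / ((2 * α - 1) * (3 - 2 * α)) - 2 / ((2 * α - 1) * (1 + 2 * α)) - 1)
          * ∑ i ∈ Icc 1 (n - a - 1), ((n : ℝ) - 1) / ((n : ℝ) + 2 * i) := by
  obtain ⟨han, hna⟩ := lt_and_lt_two_mul_of_cast_eq_mul hα hα1 hn ha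
  have hcompl : (1 - α) * n = ((n - a : ℕ) : ℝ) := by
    rw [Nat.cast_sub han.le, ha]; ring
  have hterm : ∀ i ∈ Icc 1 (n - a - 1), phiE α n i
      = ((n : ℝ) - 1) / ((2 * α - 1) * (3 - 2 * α)) * (1 / (((n - a : ℕ) : ℝ) - i))
        - ((n : ℝ) - 1) / ((2 * α - 1) * (1 + 2 * α)) * (1 / ((a : ℝ) - i))
        + (2 / ((2 * α - 1) * (3 - 2 * α)) - 2 / ((2 * α - 1) * (1 + 2 * α)) - 1)
          * (((n : ℝ) - 1) / (n + 2 * i)) := by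
    intro i hi
    have hi' : i + 1 ≤ n - a := by have := (mem_Icc.1 hi).2; omega
    have hB : (0 : ℝ) < ((n - a : ℕ) : ℝ) - i := by
      rw [sub_pos]; exact_mod_cast (show i < n - a by omega)
    have hA : (0 : ℝ) < a - i := by rw [sub_pos]; exact_mod_cast (show i < a by omega)
    rw [← hcompl, ha] at *
    exact sub_one_mul_partial_fractions α n i hA.ne' hB.ne' (by positivity)
      (by linarith) (by linarith) (by linarith)
  rw [sum_congr rfl hterm, sum_add_distrib, sum_sub_distrib, ← mul_sum, ← mul_sum, ← mul_sum,
    sum_Icc_one_div_sub_eq (by omega), sum_Icc_one_div_sub_eq (by omega),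
    show n - a - 1 - (n - a - 1) = 0 by omega, show a - 1 - (n - a - 1) = 2 * a - n by omega]
  simp [harmR]

lemma harmR_pred_sub_harmR_le (hα : 1 / 2 < α) (hα1 : α < 1) (hn : 0 < n)
    (ha : (a : ℝ) = α * n) : harmR (a - 1) - harmR (2 * a - n) ≤ (1 - α) / (2 * α - 1) := by
  obtain ⟨han, hna⟩ := lt_and_lt_two_mul_of_cast_eq_mul hα hα1 hn ha
  have hn' : (0 : ℝ) < n := by exact_mod_cast hn
  calc harmR (a - 1) - harmR (2 * a - n)
      ≤ (((a - 1 : ℕ) : ℝ) - (2 * a - n : ℕ)) / ((2 * a - n : ℕ) + 1) :=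
        harmR_sub_harmR_le (by omega)
    _ = ((1 - α) * n - 1) / ((2 * α - 1) * n + 1) := by
        rw [Nat.cast_sub (by omega), Nat.cast_sub hna.le]; push_cast; rw [ha]; ring_nf
    _ ≤ ((1 - α) * n) / ((2 * α - 1) * n) :=
        div_le_div₀ (mul_nonneg (by linarith) hn'.le) (by linarith)
          (mul_pos (by linarith) hn') (by linarith)
    _ = (1 - α) / (2 * α - 1) := mul_div_mul_right _ _ hn'.ne'

lemma abs_sub_one_mul_harmR_sub_mul_log_le (hα : 1 / 2 < α) (hα1 : α < 1) (hn : 0 < n)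
    (ha : (a : ℝ) = α * n) :
    |((n : ℝ) - 1) * harmR (n - a - 1) - n * log n| ≤ (2 - log (1 - α)) * n := by
  obtain ⟨han, -⟩ := lt_and_lt_two_mul_of_cast_eq_mul hα hα1 hn ha
  have hratio : log (n / (((n - a - 1 : ℕ) : ℝ) + 1)) = - log (1 - α) := by
    rw [Nat.cast_sub (by omega), Nat.cast_sub han.le, Nat.cast_one, ha,
      show (n : ℝ) - α * n - 1 + 1 = (1 - α) * n by ring,
      div_mul_cancel_right₀ (by positivity), log_inv]
  simpa [hratio, sub_eq_add_neg] using
    abs_mul_harmR_sub_mul_log_le (show n - a - 1 + 1 ≤ n by omega)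

theorem abs_sum_phiE_sub_le (hα : 1 / 2 < α) (hα1 : α < 1) (hn : 0 < n)
    (ha : (a : ℝ) = α * n) :
    |∑ i ∈ Icc 1 (n - a - 1), phiE α n i - n * log n / ((2 * α - 1) * (3 - 2 * α))|
      ≤ ((2 - log (1 - α)) / ((2 * α - 1) * (3 - 2 * α))
          + (1 - α) / (2 * α - 1) / ((2 * α - 1) * (1 + 2 * α))
          + |2 / ((2 * α - 1) * (3 - 2 * α)) - 2 / ((2 * α - 1) * (1 + 2 * α)) - 1|) * n := by
  obtain ⟨han, hna⟩ := lt_and_lt_two_mul_of_cast_eq_mul hα hα1 hn ha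
  have hn' : (1 : ℝ) ≤ n := by exact_mod_cast hn
  have hd₁ : 0 < (2 * α - 1) * (3 - 2 * α) := mul_pos (by linarith) (by linarith)
  have hd₂ : 0 < (2 * α - 1) * (1 + 2 * α) := mul_pos (by linarith) (by linarith)
  set c := 2 / ((2 * α - 1) * (3 - 2 * α)) - 2 / ((2 * α - 1) * (1 + 2 * α)) - 1
  set T := ∑ i ∈ Icc 1 (n - a - 1), ((n : ℝ) - 1) / ((n : ℝ) + 2 * i)
  have hH₁ := abs_sub_one_mul_harmR_sub_mul_log_le hα hα1 hn ha
  have hH₂ := harmR_pred_sub_harmR_le hα hα1 hn ha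
  have hH₂₀ := harmR_sub_harmR_nonneg (show 2 * a - n ≤ a - 1 by omega)
  have hT : T ≤ n :=
    (sum_div_add_two_mul_le n _).trans (by exact_mod_cast (by omega : n - a - 1 ≤ n))
  have hT₀ : 0 ≤ T := sum_nonneg fun i _ => div_nonneg (by linarith) (by positivity)
  have hfirst : |(((n : ℝ) - 1) * harmR (n - a - 1) - n * log n) / ((2 * α - 1) * (3 - 2 * α))|
      ≤ (2 - log (1 - α)) / ((2 * α - 1) * (3 - 2 * α)) * n := by
    rw [abs_div, abs_of_pos hd₁, div_mul_eq_mul_div]; gcongr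
  have hsecond : ((n : ℝ) - 1) * (harmR (a - 1) - harmR (2 * a - n)) / ((2 * α - 1) * (1 + 2 * α))
      ≤ (1 - α) / (2 * α - 1) / ((2 * α - 1) * (1 + 2 * α)) * n := by
    rw [div_mul_eq_mul_div, mul_comm _ (n : ℝ)]; gcongr; linarith
  have hsecond₀ : 0 ≤ ((n : ℝ) - 1) * (harmR (a - 1) - harmR (2 * a - n))
      / ((2 * α - 1) * (1 + 2 * α)) :=
    div_nonneg (mul_nonneg (by linarith) hH₂₀) hd₂.le
  have hthird : |c * T| ≤ |c| * n := by
    rw [abs_mul, abs_of_nonneg hT₀]; exact mul_le_mul_of_nonneg_left hT (abs_nonneg c)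
  have hfirst' := abs_le.1 hfirst
  have hthird' := abs_le.1 hthird
  rw [sum_phiE_eq hα hα1 hn ha, show ∀ H₁ H₂ L : ℝ,
      ((n : ℝ) - 1) / ((2 * α - 1) * (3 - 2 * α)) * H₁
        - ((n : ℝ) - 1) / ((2 * α - 1) * (1 + 2 * α)) * H₂ + c * T
        - n * L / ((2 * α - 1) * (3 - 2 * α))
      = (((n : ℝ) - 1) * H₁ - n * L) / ((2 * α - 1) * (3 - 2 * α))
        - ((n : ℝ) - 1) * H₂ / ((2 * α - 1) * (1 + 2 * α)) + c * T by intros; ring,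
    add_mul, add_mul, abs_le]
  constructor <;> linarith

end StarNetwork

/-- For the star-shaped network: the sum of expected sojourn times satisfies
`∑_{i=1}^{(1-α)n-1} φ_e(i) = n log(n)/((2α-1)(3-2α)) + O(n)`, via the exact harmonic-number
identity. -/
theorem stmt19 (α : ℝ) (hα : 1/2 < α) (hα1 : α < 1) :
    (∃ C : ℝ, 0 < C ∧ ∀ n a : ℕ, 2 ≤ n → (a : ℝ) = α * n →
      |(∑ i ∈ Finset.Icc 1 (n - a - 1), phiE α n i)
          - (n : ℝ) * Real.log n / ((2*α - 1) * (3 - 2*α))| ≤ C * n) ∧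
    (∀ n a : ℕ, 2 ≤ n → (a : ℝ) = α * n →
      (∑ i ∈ Finset.Icc 1 (n - a - 1), phiE α n i)
        = (((n : ℝ) - 1) / ((2*α - 1) * (3 - 2*α))) * harmR (n - a - 1)
          - (((n : ℝ) - 1) / ((2*α - 1) * (1 + 2*α))) * (harmR (a - 1) - harmR (2*a - n))
          + (2 / ((2*α - 1) * (3 - 2*α)) - 2 / ((2*α - 1) * (1 + 2*α)) - 1)
            * ∑ i ∈ Finset.Icc 1 (n - a - 1), ((n : ℝ) - 1) / ((n : ℝ) + 2 * i)) := by
  refine ⟨⟨_, ?_, fun n a hn ha => abs_sum_phiE_sub_le hα hα1 (by omega) ha⟩,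
    fun n a hn ha => sum_phiE_eq hα hα1 (by omega) ha⟩
  have hlog : log (1 - α) < 0 := log_neg (by linarith) (by linarith)
  have hd₁ : 0 < (2 * α - 1) * (3 - 2 * α) := mul_pos (by linarith) (by linarith)
  have hd₂ : 0 < (2 * α - 1) * (1 + 2 * α) := mul_pos (by linarith) (by linarith)
  have h₁ : 0 < (2 - log (1 - α)) / ((2 * α - 1) * (3 - 2 * α)) := div_pos (by linarith) hd₁
  have h₂ : 0 ≤ (1 - α) / (2 * α - 1) / ((2 * α - 1) * (1 + 2 * α)) :=
    div_nonneg (div_nonneg (by linarith) (by linarith)) hd₂.le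
  linarith [abs_nonneg (2 / ((2 * α - 1) * (3 - 2 * α)) - 2 / ((2 * α - 1) * (1 + 2 * α)) - 1)]
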